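/- arXiv:2504.06715 — 2 statements merged into one kernel-verified Lean document; each statement's English description precedes it below -/
import Mathlib

section
/- If the basic reproduction number R0 = β/(γ+d) satisfies R0 > 1, then the equation d(1-S*) - βI*S* + (γ + νβ(1-S*-I*)) I* exp(-dτ - νβτI*) = 0 with S* = 1/R0 has a unique solution I* in the open interval (0, 1 - S*). -/
/-!
Put `T = 1 - (γ + d)/β`, `m = νβ` and `E(I) = exp(-dτ - mτI)`. Since `βS* = γ + d`, the equation
becomes `(T - I)(d + mIE) = γI(1 - E)`. Its residual is `dT > 0` at `I = 0` and `-γT(1 - E(T)) < 0`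
at `I = T`, so the intermediate value theorem gives a root in `(0, T)`. Dividing by `I > 0`, a root
solves `(T - I)(d/I + mE) = γ(1 - E)`: as `E` decreases, the left side is a product of two positive
strictly decreasing factors while the right side is nondecreasing, so there is at most one root.
-/

open Real Set

def equilibriumResidual (γ d m T : ℝ) (E : ℝ → ℝ) (I : ℝ) : ℝ :=
  (T - I) * (d + m * I * E I) - γ * I * (1 - E I)

namespace equilibriumResidual

variable {γ d m T : ℝ} {E : ℝ → ℝ}

theorem apply_zero : equilibriumResidual γ d m T E 0 = d * T := by
  simp [equilibriumResidual, mul_comm]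

theorem apply_self : equilibriumResidual γ d m T E T = -(γ * T * (1 - E T)) := by
  simp [equilibriumResidual]

theorem div_self_eq {I : ℝ} (hI : I ≠ 0) :
    equilibriumResidual γ d m T E I / I = (T - I) * (d / I + m * E I) - γ * (1 - E I) := by
  unfold equilibriumResidual
  field_simp

theorem continuousOn (hE : ContinuousOn E (Icc 0 T)) :
    ContinuousOn (equilibriumResidual γ d m T E) (Icc 0 T) := by
  unfold equilibriumResidual
  fun_prop

theorem strictAntiOn_div_self (hγ : 0 ≤ γ) (hd : 0 < d) (hm : 0 ≤ m)
    (hE_nonneg : ∀ I ∈ Ioo 0 T, 0 ≤ E I) (hE_anti : AntitoneOn E (Ioo 0 T)) :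
    StrictAntiOn (fun I => equilibriumResidual γ d m T E I / I) (Ioo 0 T) := by
  intro I hI J hJ hIJ
  simp only [div_self_eq hI.1.ne', div_self_eq hJ.1.ne']
  have hEJI : E J ≤ E I := hE_anti hI hJ hIJ.le
  have hdiv : d / J < d / I := div_lt_div_of_pos_left hd hI.1 hIJ
  have hfactor : d / J + m * E J < d / I + m * E I := by
    have := mul_le_mul_of_nonneg_left hEJI hm
    linarith
  have hprod : (T - J) * (d / J + m * E J) < (T - I) * (d / I + m * E I) :=
    mul_lt_mul' (by linarith) hfactor
      (add_nonneg (div_pos hd hJ.1).le (mul_nonneg hm (hE_nonneg J hJ))) (by linarith [hI.2])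
  linarith [mul_le_mul_of_nonneg_left hEJI hγ]

theorem existsUnique_eq_zero (hγ : 0 < γ) (hd : 0 < d) (hm : 0 ≤ m) (hT : 0 < T)
    (hE_cont : ContinuousOn E (Icc 0 T)) (hE_nonneg : ∀ I ∈ Ioo 0 T, 0 ≤ E I)
    (hE_anti : AntitoneOn E (Ioo 0 T)) (hET : E T < 1) :
    ∃! I, I ∈ Ioo 0 T ∧ equilibriumResidual γ d m T E I = 0 := by
  have hsign :
      (0 : ℝ) ∈ Ioo (equilibriumResidual γ d m T E T) (equilibriumResidual γ d m T E 0) := by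
    rw [apply_zero, apply_self]
    constructor
    · have : 0 < γ * T * (1 - E T) := by have := sub_pos.2 hET; positivity
      linarith
    · positivity
  obtain ⟨I, hI, hI_root⟩ := intermediate_value_Ioo' hT.le (continuousOn hE_cont) hsign
  refine ⟨I, ⟨hI, hI_root⟩, fun J ⟨hJ, hJ_root⟩ => ?_⟩
  exact (strictAntiOn_div_self hγ.le hd hm hE_nonneg hE_anti).injOn hJ hI
    (by simp only [hI_root, hJ_root, zero_div])

end equilibriumResidual

theorem sirs_equilibrium_eq_equilibriumResidual {β : ℝ} (hβ : β ≠ 0) (γ d ν τ I : ℝ) :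
    d * (1 - (γ + d) / β) - β * I * ((γ + d) / β)
        + (γ + ν * β * (1 - (γ + d) / β - I)) * I * exp (-d * τ - ν * β * τ * I)
      = equilibriumResidual γ d (ν * β) (1 - (γ + d) / β)
          (fun I => exp (-d * τ - ν * β * τ * I)) I := by
  unfold equilibriumResidual
  field_simp
  ring

theorem endemic_equilibrium_exists_unique
    (β γ d ν τ : ℝ) (hβ : 0 < β) (hγ : 0 < γ) (hd : 0 < d) (hν : 0 ≤ ν) (hτ : 0 < τ)
    (hR0 : β / (γ + d) > 1) :
    ∃! I : ℝ, I ∈ Set.Ioo 0 (1 - (γ + d) / β) ∧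
      d * (1 - (γ + d) / β) - β * I * ((γ + d) / β)
        + (γ + ν * β * (1 - (γ + d) / β - I)) * I
          * Real.exp (-d * τ - ν * β * τ * I) = 0 := by
  simp_rw [sirs_equilibrium_eq_equilibriumResidual hβ.ne']
  have hT : 0 < 1 - (γ + d) / β := by
    rw [sub_pos, div_lt_one hβ]
    rwa [gt_iff_lt, one_lt_div (by positivity)] at hR0
  have hντ : 0 ≤ ν * β * τ := by positivity
  refine equilibriumResidual.existsUnique_eq_zero hγ hd (by positivity) hT (by fun_prop)
    (fun _ _ => (exp_pos _).le) ?_ ?_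
  · exact fun I _ J _ hIJ => exp_le_exp.2 (by nlinarith)
  · exact exp_lt_one_iff.2 (by nlinarith)
end

section
/- Let d, γ, β > 0 with R₀ = β/(γ+d) > 1. Define a₁^∞ = (d/(γ+d)²)·[dβ² + 2(γ+d)²(γ+d−β)] and D^∞ = (d³β²/(γ+d)²)·[dβ² + 4(γ+d)²(γ+d−β)]. If a₁^∞ ≤ 0, then D^∞ < 0. -/
theorem Dinfty_neg_of_a1infty_nonpos (d γ β : ℝ)
    (hd : 0 < d) (hγ : 0 < γ) (hβ : 0 < β)
    (hR0 : β / (γ + d) > 1)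
    (ha1 : d / (γ + d) ^ 2 * (d * β ^ 2 + 2 * (γ + d) ^ 2 * (γ + d - β)) ≤ 0) :
    d ^ 3 * β ^ 2 / (γ + d) ^ 2 * (d * β ^ 2 + 4 * (γ + d) ^ 2 * (γ + d - β)) < 0 := by
  have hs : 0 < γ + d := by linarith
  have hβgt : γ + d < β := by
    have := (one_lt_div hs).mp hR0
    linarith
  have hbr : d * β ^ 2 + 2 * (γ + d) ^ 2 * (γ + d - β) ≤ 0 := by
    by_contra h
    push_neg at h
    have := mul_pos (div_pos hd (pow_pos hs 2)) h
    linarith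
  have h4 : d * β ^ 2 + 4 * (γ + d) ^ 2 * (γ + d - β) < 0 := by
    nlinarith [pow_pos hs 2]
  have hc : 0 < d ^ 3 * β ^ 2 / (γ + d) ^ 2 :=
    div_pos (mul_pos (pow_pos hd 3) (pow_pos hβ 2)) (pow_pos hs 2)
  exact mul_neg_of_pos_of_neg hc h4
end
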